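/- arXiv:1303.5139 — 5 statements merged into one kernel-verified Lean document; each statement's English description precedes it below -/
import Mathlib

section
/- Let d : ℕ → ℝ be a function with d(k) ≥ k + (1/2)√(k log k) for all k ≥ 3 and d(k)/k → 1 as k → ∞, and for each k ≥ 3 let μ(k) be the unique positive root of μ f_{k−1}(μ) = d(k) f_k(μ). Then for all sufficiently large k one has k ≤ μ(k) ≤ d(k), and consequently μ(k)/d(k) → 1 as k → ∞. -/
/-!
Write `p_i = e^{-μ} μ^i / i!`. Since `f_{k-1} = p_{k-1} + f_k` and `μ p_{k-1} = k p_k`, the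
defining equation becomes `(d - μ) f_k(μ) = k p_k(μ)`; its right side is positive, so `μ < d`.
If `μ < k`, then `(k + j)! ≤ k! (k + M)^j` bounds `f_k(μ)` below by `p_k(μ)` times the first
`M + 1` terms of the geometric series of ratio `μ / (k + M)`. With `M ≈ s / 2`, where
`s = ½ √(k log k) ≤ d - k`, this forces `(d - μ) f_k(μ) > k p_k(μ)` once `log k ≥ 256`.
Finally `k / d → 1` squeezes `μ / d` to `1`.
-/

open Filter

/-- `fpois j μ = ∑_{i ≥ j} e^{−μ} μ^i / i!`, the probability that a Poisson(μ)
random variable is at least `j`. -/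
noncomputable def fpois (j : ℕ) (μ : ℝ) : ℝ :=
  ∑' i : ℕ, if j ≤ i then Real.exp (-μ) * μ ^ i / (Nat.factorial i) else 0

open Finset

noncomputable def poissonTerm (μ : ℝ) (i : ℕ) : ℝ :=
  Real.exp (-μ) * μ ^ i / i.factorial

lemma poissonTerm_nonneg {μ : ℝ} (hμ : 0 ≤ μ) (i : ℕ) : 0 ≤ poissonTerm μ i := by
  unfold poissonTerm; positivity

lemma poissonTerm_pos {μ : ℝ} (hμ : 0 < μ) (i : ℕ) : 0 < poissonTerm μ i := by
  unfold poissonTerm; positivity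

lemma mul_poissonTerm (μ : ℝ) (k : ℕ) :
    μ * poissonTerm μ k = (k + 1) * poissonTerm μ (k + 1) := by
  unfold poissonTerm
  rw [Nat.factorial_succ, Nat.cast_mul, pow_succ]
  field_simp
  push_cast
  ring

lemma summable_poissonTerm (μ : ℝ) : Summable (poissonTerm μ) := by
  refine ((Real.summable_pow_div_factorial μ).mul_left (Real.exp (-μ))).congr fun i => ?_
  rw [poissonTerm, mul_div_assoc]

lemma summable_fpois (j : ℕ) (μ : ℝ) :
    Summable fun i => if j ≤ i then poissonTerm μ i else 0 := by
  refine ((summable_poissonTerm μ).indicator {i | j ≤ i}).congr fun i => ?_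
  by_cases hji : j ≤ i <;> simp [hji]

lemma fpois_eq_tsum (j : ℕ) (μ : ℝ) :
    fpois j μ = ∑' i, if j ≤ i then poissonTerm μ i else 0 := rfl

lemma fpois_nonneg {μ : ℝ} (hμ : 0 ≤ μ) (j : ℕ) : 0 ≤ fpois j μ :=
  tsum_nonneg fun i => by split_ifs; exacts [poissonTerm_nonneg hμ i, le_rfl]

lemma fpois_eq_poissonTerm_add (k : ℕ) (μ : ℝ) :
    fpois k μ = poissonTerm μ k + fpois (k + 1) μ := by
  rw [fpois_eq_tsum, (summable_fpois k μ).tsum_eq_add_tsum_ite k, if_pos le_rfl, fpois_eq_tsum]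
  congr 1
  refine tsum_congr fun i => ?_
  by_cases hik : i = k
  · simp [hik]
  · simp only [hik, if_false, show k ≤ i ↔ k + 1 ≤ i by omega]

lemma sum_poissonTerm_le_fpois {μ : ℝ} (hμ : 0 ≤ μ) (k n : ℕ) :
    ∑ j ∈ range n, poissonTerm μ (k + j) ≤ fpois k μ := by
  have h := (summable_fpois k μ).sum_le_tsum ((range n).map (addLeftEmbedding k))
    (fun i _ => by split_ifs; exacts [poissonTerm_nonneg hμ i, le_rfl])
  rw [fpois_eq_tsum]
  simpa only [sum_map, addLeftEmbedding_apply, Nat.le_add_right, if_true] using h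

lemma poissonTerm_mul_div_pow_le {μ : ℝ} (hμ : 0 ≤ μ) {k j m : ℕ} (hm : k + j ≤ m) :
    poissonTerm μ k * (μ / m) ^ j ≤ poissonTerm μ (k + j) := by
  rcases j.eq_zero_or_pos with rfl | hj
  · simp
  have hfact : ((k + j).factorial : ℝ) ≤ k.factorial * (m : ℝ) ^ j := by
    rw [← Nat.factorial_mul_ascFactorial]
    exact_mod_cast Nat.mul_le_mul_left _
      ((Nat.ascFactorial_le_pow_add k j).trans (Nat.pow_le_pow_left hm j))
  have hm0 : (0 : ℝ) < m := by exact_mod_cast (show 0 < m by omega)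
  unfold poissonTerm
  rw [div_pow, div_mul_div_comm, mul_assoc, ← pow_add]
  exact div_le_div_of_nonneg_left (by positivity) (by positivity) hfact

lemma poissonTerm_mul_geom_sum_le_fpois {μ : ℝ} (hμ : 0 ≤ μ) (k M : ℕ) :
    poissonTerm μ k * ∑ j ∈ range (M + 1), (μ / (k + M)) ^ j ≤ fpois k μ := by
  refine le_trans ?_ (sum_poissonTerm_le_fpois hμ k (M + 1))
  rw [mul_sum]
  refine sum_le_sum fun j hj => ?_
  have hjM : k + j ≤ k + M := by simp only [mem_range] at hj; omega
  exact_mod_cast poissonTerm_mul_div_pow_le hμ hjM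

lemma half_sqrt_mul_log_le_self {x : ℝ} (hx : 0 ≤ x) :
    (1/2) * Real.sqrt (x * Real.log x) ≤ x := by
  have h := Real.sqrt_le_sqrt (mul_le_mul_of_nonneg_left (Real.log_le_self hx) hx)
  rw [← sq, Real.sqrt_sq hx] at h
  linarith

lemma mul_le_sq_half_sqrt_mul_log {x : ℝ} (hx : 0 ≤ x) (hlog : 256 ≤ Real.log x) :
    64 * x ≤ ((1/2) * Real.sqrt (x * Real.log x)) ^ 2 := by
  rw [mul_pow, Real.sq_sqrt (by positivity)]
  nlinarith

lemma one_sub_exp_le_mul_geom_sum {r : ℝ} (hr : 0 ≤ r) (n : ℕ) :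
    1 - Real.exp (-(n * (1 - r))) ≤ (1 - r) * ∑ i ∈ range n, r ^ i := by
  rw [mul_neg_geom_sum]
  have hr_exp : r ≤ Real.exp (r - 1) := by linarith [Real.add_one_le_exp (r - 1)]
  have := pow_le_pow_left₀ hr hr_exp n
  rw [← Real.exp_nat_mul] at this
  rw [show (n : ℝ) * (r - 1) = -(n * (1 - r)) by ring] at this
  linarith

lemma mul_add_lt_mul_one_sub_exp {K s t M : ℝ} (hK : 0 < K) (hs0 : 0 ≤ s) (hsK : s ≤ K)
    (hs : 64 * K ≤ s ^ 2) (ht : 0 < t) (hM1 : s / 2 ≤ M) (hM2 : M ≤ s / 2 + 1) :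
    K * (t + M) < (s + t) * (1 - Real.exp (-((M + 1) * (t + M) / (K + M)))) * (K + M) := by
  -- The error term `A` below is at most `16 K² / s`, while the rest exceeds `K (t + M)` by
  -- at least `K (s - M) ≥ K (s / 2 - 1)`.
  have hs64 : 64 ≤ s := by nlinarith
  have hM0 : 0 < M := by linarith
  have hKM : 0 < K + M := by linarith
  set E := Real.exp (-((M + 1) * (t + M) / (K + M)))
  have hE : E * ((M + 1) * (t + M)) ≤ K + M := by
    have h := (Real.mul_exp_neg_le_exp_neg_one ((M + 1) * (t + M) / (K + M))).trans
      (Real.exp_le_one_iff.2 (by norm_num))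
    rw [div_mul_eq_mul_div, div_le_one hKM] at h
    linarith
  set A := (s + t) * E * (K + M)
  have hA0 : 0 ≤ A := by positivity
  have hAM : A * (M * (M + 1)) ≤ s * (K + M) ^ 2 := by
    have hMs : (s + t) * M ≤ s * (t + M) := by nlinarith
    have h : A * (M * (M + 1)) * (t + M) ≤ s * (K + M) ^ 2 * (t + M) :=
      calc A * (M * (M + 1)) * (t + M) = (s + t) * M * (K + M) * (E * ((M + 1) * (t + M))) := by
            ring
        _ ≤ (s + t) * M * (K + M) * (K + M) := by gcongr
        _ = (s + t) * M * (K + M) ^ 2 := by ring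
        _ ≤ s * (t + M) * (K + M) ^ 2 := by gcongr
        _ = s * (K + M) ^ 2 * (t + M) := by ring
    exact le_of_mul_le_mul_right h (by linarith)
  have hA : A * s ≤ 16 * K ^ 2 := by
    have h1 : A * (s ^ 2 / 4) ≤ A * (M * (M + 1)) := by gcongr; nlinarith
    have h2 : s * (K + M) ^ 2 ≤ s * (4 * K ^ 2) := by gcongr; nlinarith
    nlinarith
  have hgap : 16 * K ^ 2 < s * (K * (s - M)) := by
    have h1 : 16 * K < s * (s - M) := by nlinarith
    nlinarith
  have hexpand :
      (s + t) * (1 - E) * (K + M) = K * (t + M) + (K * (s - M) + s * M + t * M) - A := by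
    ring
  rw [hexpand]
  nlinarith [mul_pos hM0 ht]

section Root

variable {k : ℕ} {μ d : ℝ}

lemma sub_mul_fpois_eq_of_root (hk : 1 ≤ k) (h : μ * fpois (k - 1) μ = d * fpois k μ) :
    (d - μ) * fpois k μ = k * poissonTerm μ k := by
  obtain ⟨n, rfl⟩ := Nat.exists_eq_add_of_le' hk
  rw [Nat.add_sub_cancel, fpois_eq_poissonTerm_add] at h
  push_cast
  linear_combination mul_poissonTerm μ n - h

lemma lt_of_sub_mul_fpois_eq (hμ : 0 < μ) (hk : 0 < k)
    (h : (d - μ) * fpois k μ = k * poissonTerm μ k) : μ < d := by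
  by_contra! hdμ
  have hR : 0 < (k : ℝ) * poissonTerm μ k :=
    mul_pos (by exact_mod_cast hk) (poissonTerm_pos hμ k)
  nlinarith [fpois_nonneg hμ.le k]

lemma natCast_le_of_sub_mul_fpois_eq {s : ℝ} (hμ : 0 < μ) (hs0 : 0 ≤ s) (hsk : s ≤ k)
    (hs : 64 * k ≤ s ^ 2) (hd : k + s ≤ d) (h : (d - μ) * fpois k μ = k * poissonTerm μ k) :
    (k : ℝ) ≤ μ := by
  by_contra! hkμ
  set t := (k : ℝ) - μ
  set M := ⌈s / 2⌉₊
  have hM1 : s / 2 ≤ M := Nat.le_ceil _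
  have hM2 : (M : ℝ) ≤ s / 2 + 1 := (Nat.ceil_lt_add_one (by positivity)).le
  have hkM : (0 : ℝ) < k + M := by linarith
  set G := ∑ j ∈ range (M + 1), (μ / (k + M)) ^ j
  have hG : (s + t) * G ≤ k := by
    have h' : (s + t) * G * poissonTerm μ k ≤ k * poissonTerm μ k :=
      calc (s + t) * G * poissonTerm μ k = (s + t) * (poissonTerm μ k * G) := by ring
        _ ≤ (d - μ) * fpois k μ :=
          mul_le_mul (by linarith) (poissonTerm_mul_geom_sum_le_fpois hμ.le k M)
            (mul_nonneg (poissonTerm_nonneg hμ.le k) (by positivity)) (by linarith)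
        _ = k * poissonTerm μ k := h
    exact le_of_mul_le_mul_right h' (poissonTerm_pos hμ k)
  have h1r : 1 - μ / (k + M) = (t + M) / (k + M) := by
    field_simp
    ring
  have hgeom : 1 - Real.exp (-((M + 1) * ((t + M) / (k + M)))) ≤ (t + M) / (k + M) * G := by
    have := one_sub_exp_le_mul_geom_sum (div_nonneg hμ.le hkM.le) (M + 1)
    rwa [h1r, Nat.cast_succ] at this
  have hkey := mul_add_lt_mul_one_sub_exp (by linarith) hs0 hsk hs (sub_pos.2 hkμ) hM1 hM2
  rw [mul_div_assoc] at hkey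
  have hcontra : (s + t) * (1 - Real.exp (-((M + 1) * ((t + M) / (k + M))))) * (k + M)
      ≤ k * (t + M) :=
    calc _ ≤ (s + t) * ((t + M) / (k + M) * G) * (k + M) := by gcongr
      _ = (s + t) * G * (t + M) := by field_simp
      _ ≤ k * (t + M) := by gcongr
  linarith

end Root

theorem stmt6 (d : ℕ → ℝ)
    (hd : ∀ k : ℕ, 3 ≤ k → (k : ℝ) + (1/2) * Real.sqrt (k * Real.log k) ≤ d k)
    (hlim : Tendsto (fun k : ℕ => d k / k) atTop (nhds 1))
    (mu : ℕ → ℝ)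
    (hmu : ∀ k : ℕ, 3 ≤ k → 0 < mu k ∧
      mu k * fpois (k - 1) (mu k) = d k * fpois k (mu k)) :
    (∀ᶠ k : ℕ in atTop, (k : ℝ) ≤ mu k ∧ mu k ≤ d k) ∧
    Tendsto (fun k : ℕ => mu k / d k) atTop (nhds 1) := by
  have hlog : ∀ᶠ k : ℕ in atTop, (256 : ℝ) ≤ Real.log k :=
    (Real.tendsto_log_atTop.comp tendsto_natCast_atTop_atTop).eventually_ge_atTop 256
  have hbounds : ∀ᶠ k : ℕ in atTop, (k : ℝ) ≤ mu k ∧ mu k ≤ d k := by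
    filter_upwards [eventually_ge_atTop 3, hlog] with k hk hlogk
    obtain ⟨hμ, hroot⟩ := hmu k hk
    have hroot' := sub_mul_fpois_eq_of_root (by omega) hroot
    exact ⟨natCast_le_of_sub_mul_fpois_eq hμ (by positivity)
        (half_sqrt_mul_log_le_self k.cast_nonneg) (mul_le_sq_half_sqrt_mul_log k.cast_nonneg hlogk)
        (hd k hk) hroot',
      (lt_of_sub_mul_fpois_eq hμ (by omega) hroot').le⟩
  have hdpos : ∀ᶠ k : ℕ in atTop, 0 < d k := by
    filter_upwards [hbounds, eventually_ge_atTop 3] with k hk h3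
    have : (3 : ℝ) ≤ k := by exact_mod_cast h3
    linarith [hk.1, hk.2]
  have hkd : Tendsto (fun k : ℕ => (k : ℝ) / d k) atTop (nhds 1) := by
    simpa only [inv_div, inv_one] using hlim.inv₀ one_ne_zero
  refine ⟨hbounds, tendsto_of_tendsto_of_tendsto_of_le_of_le' hkd tendsto_const_nhds ?_ ?_⟩
  · filter_upwards [hbounds, hdpos] with k hk hd0 using div_le_div_of_nonneg_right hk.1 hd0.le
  · filter_upwards [hbounds, hdpos] with k hk hd0 using (div_le_one hd0).2 hk.2
end

section
/- For all positive integers k, s and every integer M_s > ks, one has ∑_{d ∈ D_{s,M_s,k}} ∏_{i=1}^s 1/(d_i − k)! ≤ ( e/(M_s/s − k) )^{M_s − ks}; moreover when M_s = ks both sides equal 1 (with the convention 0^0 = 1). -/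
/-!
Shifting every entry down by `k` identifies `D_{s,M,k}` with the compositions of `m = M - ks`
into `s` parts, so by the multinomial theorem the sum equals `s^m / m!`. Finally
`m^m / m! ≤ e^m` (a single term of the series of `e^m`) gives `s^m / m! ≤ (e s / m)^m`, and
`e s / m = e / (M/s - k)`.
-/

open Filter

/-- `D_{s,M,k}`: degree sequences on `s` coordinates summing to `M`, each entry at least `k`. -/
def Dset (s M k : ℕ) : Set (Fin s → ℕ) :=
  {d | (∀ i, k ≤ d i) ∧ ∑ i, d i = M}

open Finset Nat

theorem Finset.sum_pow_div_factorial_eq_sum_piAntidiag {ι K : Type*} [DecidableEq ι] [Field K]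
    [CharZero K] (t : Finset ι) (x : ι → K) (n : ℕ) :
    (∑ i ∈ t, x i) ^ n / n ! = ∑ e ∈ piAntidiag t n, ∏ i ∈ t, x i ^ e i / (e i)! := by
  rw [sum_pow_eq_sum_piAntidiag, sum_div]
  refine sum_congr rfl fun e he => ?_
  have hspec : (∏ i ∈ t, ((e i)! : K)) * multinomial t e = n ! := by
    rw [← (mem_piAntidiag.mp he).1]
    exact_mod_cast multinomial_spec t e
  have hprod : (∏ i ∈ t, ((e i)! : K)) ≠ 0 :=
    prod_ne_zero_iff.mpr fun i _ => cast_ne_zero.mpr (factorial_ne_zero _)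
  have hmult : (multinomial t e : K) ≠ 0 := by exact_mod_cast (multinomial_pos t e).ne'
  rw [prod_div_distrib, ← hspec]
  field_simp

theorem Finset.sum_piAntidiag_prod_inv_factorial {ι : Type*} [DecidableEq ι] (t : Finset ι)
    (n : ℕ) :
    ∑ e ∈ piAntidiag t n, ∏ i ∈ t, ((e i)! : ℝ)⁻¹ = (#t : ℝ) ^ n / n ! := by
  simpa using (sum_pow_div_factorial_eq_sum_piAntidiag t (fun _ => (1 : ℝ)) n).symm

theorem Real.pow_div_factorial_le_exp_mul_div_pow {x : ℝ} (hx : 0 ≤ x) (m : ℕ) :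
    x ^ m / m ! ≤ (exp 1 * x / m) ^ m := by
  have hmm : (m : ℝ) ^ m ≠ 0 := by exact_mod_cast (pow_self_pos (n := m)).ne'
  calc x ^ m / m ! = (x / m) ^ m * ((m : ℝ) ^ m / m !) := by
        rw [div_pow]; field_simp
    _ ≤ (x / m) ^ m * exp 1 ^ m := by
        gcongr
        simpa [← exp_nat_mul, mul_comm] using
          pow_div_factorial_le_exp (x := (m : ℝ)) (Nat.cast_nonneg m) m
    _ = (exp 1 * x / m) ^ m := by rw [← mul_pow, mul_div_assoc, mul_comm]

theorem Dset_eq_image_piAntidiag {s M k : ℕ} (hM : k * s ≤ M) :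
    Dset s M k =
      ↑((piAntidiag (univ : Finset (Fin s)) (M - k * s)).image fun e i => e i + k) := by
  ext d
  simp only [Dset, Set.mem_ofPred_eq, coe_image, Set.mem_image, mem_coe, mem_piAntidiag,
    mem_univ, implies_true, and_true]
  constructor
  · rintro ⟨hle, rfl⟩
    refine ⟨fun i => d i - k, ?_, funext fun i => Nat.sub_add_cancel (hle i)⟩
    have : ∑ i, d i = ∑ i, (d i - k) + k * s :=
      calc ∑ i, d i = ∑ i, ((d i - k) + k) :=
            sum_congr rfl fun i _ => (Nat.sub_add_cancel (hle i)).symm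
        _ = ∑ i, (d i - k) + k * s := by simp [sum_add_distrib, mul_comm]
    omega
  · rintro ⟨e, he, rfl⟩
    refine ⟨fun i => Nat.le_add_left k (e i), ?_⟩
    simp only [sum_add_distrib, he, sum_const, Finset.card_fin, smul_eq_mul, mul_comm s k]
    omega

theorem tsum_Dset_eq_sum_piAntidiag {s M k : ℕ} (hM : k * s ≤ M) (g : (Fin s → ℕ) → ℝ) :
    ∑' d : Dset s M k, g (fun i => d.val i - k) = ∑ e ∈ piAntidiag univ (M - k * s), g e := by
  have hinj : Set.InjOn (fun (e : Fin s → ℕ) i => e i + k)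
      ↑(piAntidiag (univ : Finset (Fin s)) (M - k * s)) :=
    fun a _ b _ h => funext fun i => by simpa using congrFun h i
  rw [Dset_eq_image_piAntidiag hM]
  refine (Finset.tsum_subtype _ fun d : Fin s → ℕ => g fun i => d i - k).trans ?_
  rw [sum_image hinj]
  simp

theorem stmt12_general (k s : ℕ) (hs : 0 < s) (Ms : ℕ) :
    (k * s < Ms →
      (∑' d : ↥(Dset s Ms k), ∏ i, ((Nat.factorial (d.val i - k) : ℝ))⁻¹) ≤
        (Real.exp 1 / ((Ms : ℝ) / s - k)) ^ (Ms - k * s)) ∧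
    (Ms = k * s →
      (∑' d : ↥(Dset s Ms k), ∏ i, ((Nat.factorial (d.val i - k) : ℝ))⁻¹) = 1 ∧
      (Real.exp 1 / ((Ms : ℝ) / s - k)) ^ (Ms - k * s) = 1) := by
  have hsum (hM : k * s ≤ Ms) :
      (∑' d : Dset s Ms k, ∏ i, ((d.val i - k)! : ℝ)⁻¹) =
        (s : ℝ) ^ (Ms - k * s) / (Ms - k * s)! := by
    rw [tsum_Dset_eq_sum_piAntidiag hM (fun e => ∏ i, ((e i)! : ℝ)⁻¹),
      sum_piAntidiag_prod_inv_factorial, Finset.card_univ, Fintype.card_fin]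
  refine ⟨fun hlt => ?_, fun hM => ?_⟩
  · have hbase : (Ms : ℝ) / s - k = ((Ms - k * s : ℕ) : ℝ) / s := by
      rw [Nat.cast_sub hlt.le]
      field_simp
      push_cast
      ring
    rw [hsum hlt.le, hbase, div_div_eq_mul_div]
    exact Real.pow_div_factorial_le_exp_mul_div_pow (Nat.cast_nonneg s) _
  · subst hM
    rw [hsum le_rfl]
    simp

theorem stmt12 (k s : ℕ) (hk : 0 < k) (hs : 0 < s) (Ms : ℕ) (hMs : k * s ≤ Ms) :
    (k * s < Ms →
      (∑' d : ↥(Dset s Ms k), ∏ i, ((Nat.factorial (d.val i - k) : ℝ))⁻¹) ≤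
        (Real.exp 1 / ((Ms : ℝ) / s - k)) ^ (Ms - k * s)) ∧
    (Ms = k * s →
      (∑' d : ↥(Dset s Ms k), ∏ i, ((Nat.factorial (d.val i - k) : ℝ))⁻¹) = 1 ∧
      (Real.exp 1 / ((Ms : ℝ) / s - k)) ^ (Ms - k * s) = 1) :=
  stmt12_general k s hs Ms
end

section
/- Let k ≥ 1 be an integer and for each real ρ > k let μ(ρ) denote the unique positive root of μ f_{k−1}(μ)/f_k(μ) = ρ. Then the function ρ ↦ μ(ρ)^ρ · e^{−μ(ρ)} / f_k(μ(ρ)) · ( e/(ρ−k) )^{ρ−k} is strictly increasing on the interval (k, ∞); i.e., for all k < ρ₁ < ρ₂, μ(ρ₁)^{ρ₁} e^{−μ(ρ₁)} f_k(μ(ρ₁))^{−1} (e/(ρ₁−k))^{ρ₁−k} < μ(ρ₂)^{ρ₂} e^{−μ(ρ₂)} f_k(μ(ρ₂))^{−1} (e/(ρ₂−k))^{ρ₂−k}. -/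
/-!
Write `B_j(t) = ∑_{i ≥ j} tⁱ/i!`, so that `f_j(t) = e^{-t} B_j(t)` and `B_j' = B_{j-1}`.
The defining equation says `ρ = r(μ)` for `r(t) = t B_{k-1}(t) / B_k(t)`, and the logarithm of
the quantity in question is
`H(μ) = r log μ - log B_k(μ) + (r - k)(1 - log (r - k))`, with `r = r(μ)`.
Since `r / t = B_k' / B_k`, differentiating gives `H' = r' (log t - log (r - k))`.
Now `r(t)` is the mean of a Poisson(t) variable conditioned on being at least `k`, and
`t r'(t)` is its variance, which is positive; moreover `k < r(t) < k + t`.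
Hence both `r` and `H` are strictly increasing, so `ρ₁ < ρ₂` forces `μ₁ < μ₂` and then
`H(μ₁) < H(μ₂)`.
-/

open Real Finset Set
open scoped Nat

theorem sq_lt_mul_of_hasSum {ι : Type*} {w x : ι → ℝ} {s₀ s₁ s₂ : ℝ} (hw : ∀ l, 0 ≤ w l)
    {i j : ι} (hi : 0 < w i) (hj : 0 < w j) (hij : x i ≠ x j) (h₀ : HasSum w s₀)
    (h₁ : HasSum (fun l => x l * w l) s₁) (h₂ : HasSum (fun l => x l ^ 2 * w l) s₂) :
    s₁ ^ 2 < s₀ * s₂ := by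
  have hs₀ : 0 < s₀ := hasSum_lt (f := 0) hw hi hasSum_zero h₀
  have hsum : HasSum (fun l => w l * (s₀ * x l - s₁) ^ 2) (s₀ * (s₀ * s₂ - s₁ ^ 2)) := by
    rw [show s₀ * (s₀ * s₂ - s₁ ^ 2) = s₀ ^ 2 * s₂ - 2 * s₀ * s₁ * s₁ + s₁ ^ 2 * s₀ by ring]
    exact (((h₂.mul_left _).sub (h₁.mul_left _)).add (h₀.mul_left _)).congr_fun fun l => by ring
  obtain ⟨l, hl⟩ : ∃ l, 0 < w l * (s₀ * x l - s₁) ^ 2 := by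
    by_cases hxi : s₀ * x i - s₁ = 0
    · have hxj : s₀ * x j - s₁ ≠ 0 := fun hxj =>
        hij (mul_left_cancel₀ hs₀.ne' (by linarith))
      exact ⟨j, by positivity⟩
    · exact ⟨i, by positivity⟩
  have hpos := hasSum_lt (f := 0) (g := fun l => w l * (s₀ * x l - s₁) ^ 2)
    (fun l => mul_nonneg (hw l) (sq_nonneg _)) hl hasSum_zero hsum
  linarith [(mul_pos_iff_of_pos_left hs₀).mp hpos]

theorem strictMonoOn_Ioi_of_hasDerivAt_pos {f f' : ℝ → ℝ} {a : ℝ}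
    (hf : ∀ x, a < x → HasDerivAt f (f' x) x) (hf' : ∀ x, a < x → 0 < f' x) :
    StrictMonoOn f (Ioi a) :=
  strictMonoOn_of_hasDerivWithinAt_pos (convex_Ioi a)
    (fun x hx => (hf x hx).continuousAt.continuousWithinAt)
    (fun x hx => (hf x (by simpa using hx)).hasDerivWithinAt)
    (fun x hx => hf' x (by simpa using hx))

noncomputable def expTail (k : ℕ) (t : ℝ) : ℝ := exp t - ∑ i ∈ range k, t ^ i / i !

theorem succ_mul_pow_succ_div_factorial (i : ℕ) (t : ℝ) :
    ((i + 1 : ℕ) : ℝ) * (t ^ (i + 1) / (i + 1)!) = t * (t ^ i / i !) := by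
  rw [Nat.factorial_succ, pow_succ]
  push_cast
  field_simp

theorem hasDerivAt_sum_range_pow_div_factorial (k : ℕ) (t : ℝ) :
    HasDerivAt (fun s : ℝ => ∑ i ∈ range (k + 1), s ^ i / i !) (∑ i ∈ range k, t ^ i / i !) t := by
  induction k with
  | zero => simpa using hasDerivAt_const t (1 : ℝ)
  | succ k ih =>
    have hterm : HasDerivAt (fun s : ℝ => s ^ (k + 1) / (k + 1)!) (t ^ k / k !) t := by
      refine ((hasDerivAt_pow (k + 1) t).div_const ((k + 1)! : ℝ)).congr_deriv ?_
      rw [Nat.add_sub_cancel, Nat.factorial_succ]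
      push_cast
      field_simp
    rw [sum_range_succ]
    simp_rw [sum_range_succ _ (k + 1)]
    exact ih.add hterm

section expTail

variable (k : ℕ) (t : ℝ)

theorem hasSum_expTail : HasSum (fun j => t ^ (j + k) / (j + k)!) (expTail k t) :=
  (hasSum_nat_add_iff' k).mpr (exp_eq_exp_ℝ ▸ NormedSpace.expSeries_div_hasSum_exp t)

theorem expTail_eq_add : expTail k t = t ^ k / k ! + expTail (k + 1) t := by
  simp only [expTail, sum_range_succ]
  ring

theorem hasDerivAt_expTail : HasDerivAt (expTail k) (expTail (k - 1) t) t := by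
  cases k with
  | zero =>
    have h : expTail 0 = exp := funext fun s => by simp [expTail]
    simpa [h] using hasDerivAt_exp t
  | succ k => exact (hasDerivAt_exp t).sub (hasDerivAt_sum_range_pow_div_factorial k t)

theorem fpois_eq_exp_neg_mul_expTail : fpois k t = exp (-t) * expTail k t := by
  refine HasSum.tsum_eq ((hasSum_nat_add_iff' k).mp ?_)
  rw [sum_eq_zero fun i hi => if_neg (by simpa using hi), sub_zero]
  exact ((hasSum_expTail k t).mul_left (exp (-t))).congr_fun fun j => by simp [mul_div_assoc]

theorem hasSum_mul_expTail :
    HasSum (fun j => ((j + k : ℕ) : ℝ) * (t ^ (j + k) / (j + k)!)) (t * expTail (k - 1) t) := by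
  cases k with
  | succ k =>
    exact ((hasSum_expTail k t).mul_left t).congr_fun fun j =>
      succ_mul_pow_succ_div_factorial (j + k) t
  | zero =>
    rw [← hasSum_nat_add_iff' 1]
    simpa using ((hasSum_expTail 0 t).mul_left t).congr_fun fun j =>
      succ_mul_pow_succ_div_factorial j t

theorem hasSum_sq_mul_expTail :
    HasSum (fun j => ((j + k : ℕ) : ℝ) ^ 2 * (t ^ (j + k) / (j + k)!))
      (t * (expTail (k - 1) t + t * expTail (k - 2) t)) := by
  have hsucc (m : ℕ) :
      HasSum (fun j => ((j + (m + 1) : ℕ) : ℝ) ^ 2 * (t ^ (j + (m + 1)) / (j + (m + 1))!))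
        (t * (expTail m t + t * expTail (m - 1) t)) := by
    rw [show t * (expTail m t + t * expTail (m - 1) t)
      = t * (t * expTail (m - 1) t + expTail m t) by ring]
    refine (((hasSum_mul_expTail m t).add (hasSum_expTail m t)).mul_left t).congr_fun fun j => ?_
    show ((j + m + 1 : ℕ) : ℝ) ^ 2 * (t ^ (j + m + 1) / (j + m + 1)!) = _
    rw [sq, mul_assoc, succ_mul_pow_succ_div_factorial]
    push_cast
    ring
  cases k with
  | succ k => simpa using hsucc k
  | zero =>
    rw [← hasSum_nat_add_iff' 1]
    simpa using hsucc 0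

variable {t}

theorem expTail_pos (ht : 0 < t) : 0 < expTail k t :=
  hasSum_lt (f := 0) (i := 0) (fun j => by positivity) (by positivity) hasSum_zero
    (hasSum_expTail k t)

/-- The Poisson(t) law conditioned on being at least `k` has positive variance. -/
theorem sq_mul_expTail_lt (ht : 0 < t) :
    (t * expTail (k - 1) t) ^ 2 <
      expTail k t * (t * (expTail (k - 1) t + t * expTail (k - 2) t)) :=
  sq_lt_mul_of_hasSum (i := 0) (j := 1) (fun j => by positivity) (by positivity) (by positivity)
    (by simp) (hasSum_expTail k t) (hasSum_mul_expTail k t) (hasSum_sq_mul_expTail k t)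

end expTail

/-- The mean of a Poisson(t) variable conditioned on being at least `k`. -/
noncomputable def truncMean (k : ℕ) (t : ℝ) : ℝ := t * expTail (k - 1) t / expTail k t

section truncMean

variable (k : ℕ) {t : ℝ}

theorem mul_fpois_div_fpois (t : ℝ) : t * fpois (k - 1) t / fpois k t = truncMean k t := by
  rw [fpois_eq_exp_neg_mul_expTail, fpois_eq_exp_neg_mul_expTail, mul_left_comm,
    mul_div_mul_left _ _ (exp_ne_zero _), truncMean]

theorem hasDerivAt_truncMean (ht : 0 < t) :
    HasDerivAt (truncMean k) ((expTail k t * (t * (expTail (k - 1) t + t * expTail (k - 2) t))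
      - (t * expTail (k - 1) t) ^ 2) / (t * expTail k t ^ 2)) t := by
  have hB := expTail_pos k ht
  refine (((hasDerivAt_id t).mul (hasDerivAt_expTail (k - 1) t)).div (hasDerivAt_expTail k t)
    hB.ne').congr_deriv ?_
  simp only [Nat.sub_sub, Pi.mul_apply, id]
  field_simp

theorem deriv_truncMean_pos (ht : 0 < t) : 0 < deriv (truncMean k) t := by
  rw [(hasDerivAt_truncMean k ht).deriv]
  have hB := expTail_pos k ht
  exact div_pos (sub_pos.mpr (sq_mul_expTail_lt k ht)) (by positivity)

theorem strictMonoOn_truncMean : StrictMonoOn (truncMean k) (Ioi 0) :=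
  strictMonoOn_Ioi_of_hasDerivAt_pos
    (fun _ ht => (hasDerivAt_truncMean k ht).differentiableAt.hasDerivAt)
    (fun _ ht => deriv_truncMean_pos k ht)

theorem lt_truncMean (ht : 0 < t) : (k : ℝ) < truncMean k t := by
  have h : HasSum (fun j : ℕ => (j : ℝ) * (t ^ (j + k) / (j + k)!))
      (t * expTail (k - 1) t - k * expTail k t) :=
    ((hasSum_mul_expTail k t).sub ((hasSum_expTail k t).mul_left (k : ℝ))).congr_fun fun j => by
      push_cast; ring
  have hpos : 0 < t * expTail (k - 1) t - k * expTail k t :=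
    hasSum_lt (f := 0) (i := 1) (fun j => by positivity) (by simp; positivity) hasSum_zero h
  rw [truncMean, lt_div_iff₀ (expTail_pos k ht)]
  simpa using hpos

theorem truncMean_lt (hk : 1 ≤ k) (ht : 0 < t) : truncMean k t < k + t := by
  obtain ⟨m, rfl⟩ := Nat.exists_eq_add_of_le' hk
  have h₁ := expTail_eq_add m t
  have h₂ := expTail_eq_add (m + 1) t
  have h₃ := succ_mul_pow_succ_div_factorial m t
  have h₄ := expTail_pos (m + 1 + 1) ht
  rw [truncMean, div_lt_iff₀ (expTail_pos _ ht), Nat.add_sub_cancel, h₁]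
  push_cast at h₃ ⊢
  nlinarith [mul_pos m.cast_add_one_pos h₄]

end truncMean

noncomputable def logObjective (k : ℕ) (t : ℝ) : ℝ :=
  truncMean k t * log t - log (expTail k t) + (truncMean k t - k) * (1 - log (truncMean k t - k))

section logObjective

variable (k : ℕ) {t : ℝ}

theorem hasDerivAt_logObjective {r' : ℝ} (ht : 0 < t) (hr : HasDerivAt (truncMean k) r' t) :
    HasDerivAt (logObjective k) (r' * (log t - log (truncMean k t - k))) t := by
  have hB := expTail_pos k ht
  have hφ := sub_pos.mpr (lt_truncMean k ht)
  have hr₀ := hr.sub_const (k : ℝ)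
  refine (((hr.mul (hasDerivAt_log ht.ne')).sub ((hasDerivAt_expTail k t).log hB.ne')).add
    (hr₀.mul ((hr₀.log hφ.ne').const_sub 1))).congr_deriv ?_
  have hrt : truncMean k t * t⁻¹ = expTail (k - 1) t / expTail k t := by
    rw [truncMean]; field_simp
  rw [hrt]
  field_simp
  ring

theorem strictMonoOn_logObjective (hk : 1 ≤ k) : StrictMonoOn (logObjective k) (Ioi 0) :=
  strictMonoOn_Ioi_of_hasDerivAt_pos
    (fun _ ht => hasDerivAt_logObjective k ht
      (hasDerivAt_truncMean k ht).differentiableAt.hasDerivAt)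
    (fun t ht => mul_pos (deriv_truncMean_pos k ht) (sub_pos.mpr
      (log_lt_log (sub_pos.mpr (lt_truncMean k ht)) (by linarith [truncMean_lt k hk ht]))))

theorem exp_logObjective {μ : ℝ} (hμ : 0 < μ) :
    exp (logObjective k μ) = μ ^ truncMean k μ * exp (-μ) / fpois k μ *
      (exp 1 / (truncMean k μ - k)) ^ (truncMean k μ - k) := by
  have hφ := sub_pos.mpr (lt_truncMean k hμ)
  rw [fpois_eq_exp_neg_mul_expTail, rpow_def_of_pos hμ, rpow_def_of_pos (by positivity),
    log_div (exp_ne_zero 1) hφ.ne', log_exp, logObjective, exp_add, exp_sub,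
    exp_log (expTail_pos k hμ)]
  field_simp

end logObjective

theorem stmt14_general (k : ℕ) (hk : 1 ≤ k) (ρ₁ ρ₂ : ℝ) (hρ₁₂ : ρ₁ < ρ₂)
    (μ₁ μ₂ : ℝ) (hμ₁ : 0 < μ₁) (hμ₂ : 0 < μ₂)
    (heq₁ : μ₁ * fpois (k - 1) μ₁ / fpois k μ₁ = ρ₁)
    (heq₂ : μ₂ * fpois (k - 1) μ₂ / fpois k μ₂ = ρ₂) :
    μ₁ ^ ρ₁ * Real.exp (-μ₁) / fpois k μ₁ * (Real.exp 1 / (ρ₁ - k)) ^ (ρ₁ - k) <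
    μ₂ ^ ρ₂ * Real.exp (-μ₂) / fpois k μ₂ * (Real.exp 1 / (ρ₂ - k)) ^ (ρ₂ - k) := by
  rw [mul_fpois_div_fpois] at heq₁ heq₂
  subst heq₁ heq₂
  have hμ : μ₁ < μ₂ := ((strictMonoOn_truncMean k).lt_iff_lt hμ₁ hμ₂).mp hρ₁₂
  rw [← exp_logObjective k hμ₁, ← exp_logObjective k hμ₂]
  exact exp_lt_exp.mpr (strictMonoOn_logObjective k hk hμ₁ hμ₂ hμ)

theorem stmt14 (k : ℕ) (hk : 1 ≤ k) (ρ₁ ρ₂ : ℝ) (hρ₁ : (k : ℝ) < ρ₁) (hρ₁₂ : ρ₁ < ρ₂)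
    (μ₁ μ₂ : ℝ) (hμ₁ : 0 < μ₁) (hμ₂ : 0 < μ₂)
    (heq₁ : μ₁ * fpois (k - 1) μ₁ / fpois k μ₁ = ρ₁)
    (heq₂ : μ₂ * fpois (k - 1) μ₂ / fpois k μ₂ = ρ₂) :
    μ₁ ^ ρ₁ * Real.exp (-μ₁) / fpois k μ₁ * (Real.exp 1 / (ρ₁ - k)) ^ (ρ₁ - k) <
    μ₂ ^ ρ₂ * Real.exp (-μ₂) / fpois k μ₂ * (Real.exp 1 / (ρ₂ - k)) ^ (ρ₂ - k) :=
  stmt14_general k hk ρ₁ ρ₂ hρ₁₂ μ₁ μ₂ hμ₁ hμ₂ heq₁ heq₂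
end

section
/- Let k ≥ 1 be an integer and let G be a finite simple graph. Let B be the set of vertices v of G such that v has degree at least k+1 in G and every neighbour of v has degree exactly k in G. Then every k-regular subgraph H of G satisfies |V(G)| − |V(H)| ≥ |B|/k; in particular, H omits at least one neighbour of each vertex of B, and each vertex of G is a neighbour of at most k vertices of B among those forced to be omitted. -/
/-! If every neighbour of `v ∈ B` lay in the `k`-regular subgraph `H`, each such neighbour `u`
would keep all of its `k` edges in `H`, so `H` would contain every edge at `v`, giving `v` degree
more than `k` in `H`. Hence each vertex of `B` has a neighbour outside `H`. Such an omitted vertex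
is adjacent to a vertex of `B`, so it has degree `k` and is counted for at most `k` vertices of
`B`; double counting gives `|B| ≤ k · |V(G) \ V(H)|`. -/

namespace SimpleGraph

variable {V : Type*} {G : SimpleGraph V}

/-- The set `B` of the statement. -/
def hubs (G : SimpleGraph V) (k : ℕ) : Set V :=
  {v | k + 1 ≤ (G.neighborSet v).ncard ∧ ∀ u, G.Adj v u → (G.neighborSet u).ncard = k}

theorem Subgraph.neighborSet_eq_of_ncard_eq [Finite V] {H : G.Subgraph} {u : V}
    (h : (H.neighborSet u).ncard = (G.neighborSet u).ncard) :
    H.neighborSet u = G.neighborSet u :=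
  Set.eq_of_subset_of_ncard_le (H.neighborSet_subset u) h.ge

theorem exists_adj_notMem_verts_of_mem_hubs [Finite V] {k : ℕ} {H : G.Subgraph}
    (hreg : ∀ v ∈ H.verts, (H.neighborSet v).ncard = k) {v : V} (hv : v ∈ G.hubs k) :
    ∃ w, G.Adj v w ∧ w ∉ H.verts := by
  by_contra! hin
  have hsub : G.neighborSet v ⊆ H.neighborSet v := fun u hu => by
    have hu' : H.neighborSet u = G.neighborSet u :=
      Subgraph.neighborSet_eq_of_ncard_eq <| by rw [hreg u (hin u hu), hv.2 u hu]
    exact (hu'.symm ▸ hu.symm : v ∈ H.neighborSet u).symm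
  obtain ⟨u, hu⟩ : (G.neighborSet v).Nonempty :=
    Set.nonempty_of_ncard_ne_zero (Nat.ne_zero_of_lt hv.1)
  have hvH : v ∈ H.verts := (hsub hu).fst_mem
  have hle : (G.neighborSet v).ncard ≤ k := hreg v hvH ▸ Set.ncard_le_ncard hsub
  exact absurd hle (Nat.not_le.mpr hv.1)

theorem ncard_hubs_le_mul_ncard_compl_verts [Finite V] {k : ℕ} {H : G.Subgraph}
    (hreg : ∀ v ∈ H.verts, (H.neighborSet v).ncard = k) :
    (G.hubs k).ncard ≤ k * H.vertsᶜ.ncard := by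
  classical
  have := Fintype.ofFinite V
  simp only [Set.ncard_eq_toFinset_card']
  rw [← mul_one (G.hubs k).toFinset.card, mul_comm k]
  refine Finset.card_mul_le_card_mul G.Adj (fun v hv => ?_) (fun w _ => ?_)
  · obtain ⟨w, hvw, hw⟩ :=
      exists_adj_notMem_verts_of_mem_hubs hreg (Set.mem_toFinset.mp hv)
    exact Finset.card_pos.mpr
      ⟨w, (Finset.mem_bipartiteAbove G.Adj).mpr ⟨Set.mem_toFinset.mpr hw, hvw⟩⟩
  · rcases Finset.eq_empty_or_nonempty ((G.hubs k).toFinset.bipartiteBelow G.Adj w) with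
      hempty | ⟨v, hv⟩
    · simp [hempty]
    obtain ⟨hvB, hvw⟩ := (Finset.mem_bipartiteBelow G.Adj).mp hv
    calc _ ≤ (G.neighborSet w).toFinset.card :=
          Finset.card_le_card fun x hx => Set.mem_toFinset.mpr
            ((Finset.mem_bipartiteBelow G.Adj).mp hx).2.symm
      _ = k := by
          rw [← Set.ncard_eq_toFinset_card']
          exact (Set.mem_toFinset.mp hvB).2 w hvw

end SimpleGraph

theorem stmt17_general {V : Type*} [Fintype V] (k : ℕ) (G : SimpleGraph V)
    (H : G.Subgraph) (hreg : ∀ v ∈ H.verts, (H.neighborSet v).ncard = k) :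
    (({v : V | k + 1 ≤ (G.neighborSet v).ncard ∧
        ∀ u, G.Adj v u → (G.neighborSet u).ncard = k}.ncard : ℝ)) / k ≤
      (Fintype.card V : ℝ) - (H.verts.ncard : ℝ) := by
  have hcount : (G.hubs k).ncard ≤ k * H.vertsᶜ.ncard :=
    SimpleGraph.ncard_hubs_le_mul_ncard_compl_verts hreg
  have hcompl : H.verts.ncard + H.vertsᶜ.ncard = Fintype.card V := by
    rw [Set.ncard_add_ncard_compl, Nat.card_eq_fintype_card]
  have hdiff : (Fintype.card V : ℝ) - H.verts.ncard = H.vertsᶜ.ncard := by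
    rw [← hcompl]; push_cast; ring
  rw [hdiff]
  refine div_le_of_le_mul₀ k.cast_nonneg (Nat.cast_nonneg _) ?_
  rw [mul_comm]
  exact_mod_cast hcount

theorem stmt17 {V : Type*} [Fintype V] (k : ℕ) (hk : 1 ≤ k) (G : SimpleGraph V)
    (H : G.Subgraph) (hreg : ∀ v ∈ H.verts, (H.neighborSet v).ncard = k) :
    (({v : V | k + 1 ≤ (G.neighborSet v).ncard ∧
        ∀ u, G.Adj v u → (G.neighborSet u).ncard = k}.ncard : ℝ)) / k ≤
      (Fintype.card V : ℝ) - (H.verts.ncard : ℝ) :=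
  stmt17_general k G H hreg
end

section
/- The function η ↦ (η−1)^{(η−1)/2} · η^{−η/2} is strictly decreasing on the interval (1, ∞), and its limit as η → 1⁺ equals 1. -/
/-! On `(1, ∞)` the function is `exp (g η / 2)` with `g η = (η - 1) log (η - 1) - η log η`.
Since `g' η = log (η - 1) - log η < 0`, `g` is strictly decreasing, and since `x log x` is continuous
on `[0, ∞)` and vanishes at `0` and `1`, `g η → 0` as `η → 1⁺`. -/

open Filter Real Set

lemma hasDerivAt_sub_one_mul_log_sub_mul_log {x : ℝ} (hx : 1 < x) :
    HasDerivAt (fun y => (y - 1) * log (y - 1) - y * log y) (log (x - 1) - log x) x := by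
  have hshift : HasDerivAt (fun y => (y - 1) * log (y - 1)) (log (x - 1) + 1) x := by
    simpa [Function.comp_def] using
      (hasDerivAt_mul_log (sub_ne_zero.2 hx.ne')).comp x ((hasDerivAt_id x).sub_const 1)
  exact (hshift.sub (hasDerivAt_mul_log (by positivity))).congr_deriv (by ring)

lemma strictAntiOn_sub_one_mul_log_sub_mul_log :
    StrictAntiOn (fun x : ℝ => (x - 1) * log (x - 1) - x * log x) (Ioi 1) := by
  refine strictAntiOn_of_deriv_neg (convex_Ioi 1)
    (fun x hx => (hasDerivAt_sub_one_mul_log_sub_mul_log hx).continuousAt.continuousWithinAt)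
    fun x hx => ?_
  rw [interior_Ioi] at hx
  rw [(hasDerivAt_sub_one_mul_log_sub_mul_log hx).deriv, sub_neg]
  exact log_lt_log (sub_pos.2 hx) (sub_one_lt x)

lemma continuous_sub_one_mul_log_sub_mul_log :
    Continuous fun x : ℝ => (x - 1) * log (x - 1) - x * log x :=
  (continuous_mul_log.comp (continuous_sub_right 1)).sub continuous_mul_log

lemma sub_one_rpow_mul_rpow_eq_exp {η : ℝ} (hη : 1 < η) :
    (η - 1) ^ ((η - 1) / 2) * η ^ (-η / 2) =
      exp (((η - 1) * log (η - 1) - η * log η) / 2) := by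
  rw [rpow_def_of_pos (sub_pos.2 hη), rpow_def_of_pos (by linarith), ← exp_add]
  ring_nf

theorem stmt19 :
    StrictAntiOn (fun η : ℝ => (η - 1) ^ ((η - 1)/2) * η ^ (-η/2)) (Set.Ioi 1) ∧
    Tendsto (fun η : ℝ => (η - 1) ^ ((η - 1)/2) * η ^ (-η/2))
      (nhdsWithin 1 (Set.Ioi 1)) (nhds 1) := by
  have hexp : EqOn (fun η : ℝ => (η - 1) ^ ((η - 1)/2) * η ^ (-η/2))
      (fun η => exp (((η - 1) * log (η - 1) - η * log η) / 2)) (Ioi 1) :=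
    fun η hη => sub_one_rpow_mul_rpow_eq_exp hη
  constructor
  · refine StrictAntiOn.congr ?_ hexp.symm
    exact exp_strictMono.comp_strictAntiOn fun a ha b hb hab =>
      div_lt_div_of_pos_right (strictAntiOn_sub_one_mul_log_sub_mul_log ha hb hab) two_pos
  · have hcont : Continuous fun η : ℝ => exp (((η - 1) * log (η - 1) - η * log η) / 2) :=
      continuous_exp.comp (continuous_sub_one_mul_log_sub_mul_log.div_const 2)
    have hlim := (hcont.tendsto 1).mono_left (nhdsWithin_le_nhds (s := Ioi 1))
    simp only [sub_self, zero_mul, log_one, mul_zero, zero_div, exp_zero] at hlim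
    exact hlim.congr' (eventuallyEq_nhdsWithin_of_eqOn hexp.symm)
end
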